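/- With a_n the total bitsum over solus strings of length n and F(n+2) the number of such strings, the average density of 1s satisfies \lim_{n\to\infty} a_n/(n F(n+2)) = (5 - \sqrt5)/10. -/

import Mathlib

open Filter

/-- A bitstring is *solus* if no two adjacent bits are both `1`. -/
def Solus (l : List Bool) : Prop :=
  l.Chain' (fun a b => ¬(a = true ∧ b = true))

open Classical in
/-- `a n` : total number of `1`s summed over all solus bitstrings of length `n`. -/
noncomputable def solusBitsum (n : ℕ) : ℕ :=
  ∑ v : Fin n → Bool, if Solus (List.ofFn v) then (List.ofFn v).count true else 0

open Classical

noncomputable def solusCount (n : ℕ) : ℕ :=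
  ∑ v : Fin n → Bool, if Solus (List.ofFn v) then 1 else 0

lemma sum_ofFn_succ (f : List Bool → ℕ) (n : ℕ) :
    ∑ v : Fin (n+1) → Bool, f (List.ofFn v)
      = ∑ b : Bool, ∑ v : Fin n → Bool, f (b :: List.ofFn v) := by
  have h := Fintype.sum_equiv (Fin.consEquiv (n := n) fun _ => Bool).symm
    (fun v => f (List.ofFn v)) (fun p => f (p.1 :: List.ofFn p.2))
    (fun v => by simp only [Fin.consEquiv_symm_apply, List.ofFn_succ]; rfl)
  rw [h, Fintype.sum_prod_type]

@[simp] lemma solus_false_cons (l : List Bool) : Solus (false :: l) ↔ Solus l := by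
  simp [Solus, List.Chain', List.isChain_cons]

@[simp] lemma solus_true_true (l : List Bool) : ¬ Solus (true :: true :: l) := by
  simp [Solus, List.Chain', List.isChain_cons_cons]

@[simp] lemma solus_true_false (l : List Bool) : Solus (true :: false :: l) ↔ Solus l := by
  simp [Solus, List.Chain', List.isChain_cons_cons, List.isChain_cons]

lemma count_true_split (n : ℕ) :
    (∑ v : Fin (n+1) → Bool, if Solus (true :: List.ofFn v)
        then (true :: List.ofFn v).count true else 0)
      = solusBitsum n + solusCount n := by
  rw [sum_ofFn_succ (fun l => if Solus (true :: l) then (true :: l).count true else 0),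
    Fintype.sum_bool]
  have h1 : (∑ v : Fin n → Bool, if Solus (true :: true :: List.ofFn v)
      then (true :: true :: List.ofFn v).count true else 0) = 0 :=
    Finset.sum_eq_zero fun v _ => by simp
  have h2 : (∑ v : Fin n → Bool, if Solus (true :: false :: List.ofFn v)
      then (true :: false :: List.ofFn v).count true else 0)
      = solusBitsum n + solusCount n := by
    unfold solusBitsum solusCount
    rw [← Finset.sum_add_distrib]
    refine Finset.sum_congr rfl fun v _ => ?_
    by_cases h : Solus (List.ofFn v) <;> simp [h, List.count_cons]
  rw [h1, h2, zero_add]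

lemma solusBitsum_rec (n : ℕ) :
    solusBitsum (n+2) = solusBitsum (n+1) + solusBitsum n + solusCount n := by
  unfold solusBitsum
  rw [sum_ofFn_succ (fun l => if Solus l then l.count true else 0), Fintype.sum_bool]
  have h1 : (∑ v : Fin (n+1) → Bool, if Solus (false :: List.ofFn v)
      then (false :: List.ofFn v).count true else 0)
      = ∑ v : Fin (n+1) → Bool, if Solus (List.ofFn v)
        then (List.ofFn v).count true else 0 :=
    Finset.sum_congr rfl fun v _ => by
      by_cases h : Solus (List.ofFn v) <;> simp [h, List.count_cons]
  rw [h1, count_true_split]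
  unfold solusBitsum
  ring

lemma solusCount_rec (n : ℕ) : solusCount (n+2) = solusCount (n+1) + solusCount n := by
  unfold solusCount
  rw [sum_ofFn_succ (fun l => if Solus l then 1 else 0), Fintype.sum_bool]
  have ht : (∑ v : Fin (n+1) → Bool, if Solus (true :: List.ofFn v) then 1 else 0)
      = solusCount n := by
    rw [sum_ofFn_succ (fun l => if Solus (true :: l) then 1 else 0), Fintype.sum_bool]
    have h1 : (∑ v : Fin n → Bool, if Solus (true :: true :: List.ofFn v) then 1 else 0) = 0 :=
      Finset.sum_eq_zero fun v _ => by simp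
    have h2 : (∑ v : Fin n → Bool, if Solus (true :: false :: List.ofFn v) then 1 else 0)
        = solusCount n :=
      Finset.sum_congr rfl fun v _ => by by_cases h : Solus (List.ofFn v) <;> simp [h]
    rw [h1, h2, zero_add]
  have hf : (∑ v : Fin (n+1) → Bool, if Solus (false :: List.ofFn v) then 1 else 0)
      = solusCount (n+1) :=
    Finset.sum_congr rfl fun v _ => by by_cases h : Solus (List.ofFn v) <;> simp [h]
  rw [ht, hf]
  exact add_comm _ _

lemma solusCount_zero : solusCount 0 = 1 := by simp [solusCount, Solus, List.Chain', List.isChain_nil]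

lemma solusCount_one : solusCount 1 = 2 := by
  have : solusCount (0+1) = 2 := by
    unfold solusCount
    rw [sum_ofFn_succ (fun l => if Solus l then 1 else 0), Fintype.sum_bool]
    simp [Solus, List.Chain', List.isChain_singleton]
  exact this

lemma solusBitsum_zero : solusBitsum 0 = 0 := by simp [solusBitsum]

lemma solusBitsum_one : solusBitsum 1 = 1 := by
  have : solusBitsum (0+1) = 1 := by
    unfold solusBitsum
    rw [sum_ofFn_succ (fun l => if Solus l then l.count true else 0), Fintype.sum_bool]
    simp [Solus, List.Chain', List.isChain_singleton]
  exact this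

lemma solusCount_eq_fib : ∀ n, solusCount n = Nat.fib (n+2)
  | 0 => by rw [solusCount_zero]; rfl
  | 1 => by rw [solusCount_one]; rfl
  | (n+2) => by
      rw [solusCount_rec, solusCount_eq_fib (n+1), solusCount_eq_fib n]
      simp only [show n+1+2 = n+3 from rfl, show n+2+2 = n+4 from rfl]
      have h : Nat.fib (n+4) = Nat.fib (n+2) + Nat.fib (n+3) := Nat.fib_add_two
      have h' : Nat.fib (n+3) = Nat.fib (n+1) + Nat.fib (n+2) := Nat.fib_add_two
      omega

lemma solusBitsum_formula : ∀ n,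
    5 * solusBitsum n + Nat.fib (n+1) = (n+1) * (Nat.fib n + Nat.fib (n+2))
  | 0 => by rw [solusBitsum_zero]; rfl
  | 1 => by rw [solusBitsum_one]; rfl
  | (n+2) => by
      have h1 := solusBitsum_formula (n+1)
      have h2 := solusBitsum_formula n
      have e2 : Nat.fib (n+2) = Nat.fib n + Nat.fib (n+1) := Nat.fib_add_two
      have e3 : Nat.fib (n+3) = Nat.fib (n+1) + Nat.fib (n+2) := Nat.fib_add_two
      have e4 : Nat.fib (n+4) = Nat.fib (n+2) + Nat.fib (n+3) := Nat.fib_add_two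
      rw [solusBitsum_rec, solusCount_eq_fib]
      simp only [show n+2+1 = n+3 from rfl, show n+2+2 = n+4 from rfl,
        show n+1+1 = n+2 from rfl, show n+1+2 = n+3 from rfl] at *
      zify at h1 h2 ⊢
      rw [e4, e3, e2] at *
      push_cast at *
      linear_combination h1 + h2

lemma abs_ratio_lt_one : |Real.goldenConj / Real.goldenRatio| < 1 := by
  rw [abs_div, abs_of_pos Real.goldenRatio_pos, div_lt_one Real.goldenRatio_pos]
  have h1 : |Real.goldenConj| < 1 := abs_lt.2 ⟨Real.neg_one_lt_goldenConj, by linarith [Real.goldenConj_neg]⟩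
  linarith [Real.one_lt_goldenRatio]

lemma fib_div_tendsto :
    Tendsto (fun n : ℕ => (Nat.fib n : ℝ) / (Nat.fib (n+2))) atTop
      (nhds ((3 - Real.sqrt 5)/2)) := by
  set r := Real.goldenConj / Real.goldenRatio with hr
  have hrlim : Tendsto (fun n : ℕ => r ^ n) atTop (nhds 0) :=
    tendsto_pow_atTop_nhds_zero_of_abs_lt_one abs_ratio_lt_one
  have hmain : Tendsto (fun n : ℕ => (1 - r^n) / (Real.goldenRatio^2 - Real.goldenConj^2 * r^n)) atTop
      (nhds ((1 - 0)/(Real.goldenRatio^2 - Real.goldenConj^2 * 0))) := by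
    refine Tendsto.div (tendsto_const_nhds.sub hrlim)
      (tendsto_const_nhds.sub (tendsto_const_nhds.mul hrlim)) ?_
    have := Real.goldenRatio_pos
    simp only [mul_zero, sub_zero]
    positivity
  have hval : ((1:ℝ) - 0)/(Real.goldenRatio^2 - Real.goldenConj^2 * (0:ℝ)) = (3 - Real.sqrt 5)/2 := by
    have h5 : Real.sqrt 5 ^ 2 = 5 := Real.sq_sqrt (by norm_num)
    have hg : Real.goldenRatio = (1 + Real.sqrt 5)/2 := rfl
    have hs : (0:ℝ) < Real.sqrt 5 := by positivity
    rw [hg]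
    rw [mul_zero, sub_zero, sub_zero]
    rw [div_eq_div_iff (by positivity) (by norm_num)]
    nlinarith [h5]
  rw [hval] at hmain
  refine hmain.congr fun n => ?_
  have hphi : (0:ℝ) < Real.goldenRatio := Real.goldenRatio_pos
  have hphin : (0:ℝ) < Real.goldenRatio ^ n := by positivity
  have hfib : (0:ℝ) < Nat.fib (n+2) := by
    exact_mod_cast Nat.fib_pos.2 (by omega)
  have h5 : Real.sqrt 5 ≠ 0 := by positivity
  have hden : Real.goldenRatio^2 - Real.goldenConj^2 * r^n
      = Real.sqrt 5 * Nat.fib (n+2) / Real.goldenRatio^n := by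
    rw [Real.coe_fib_eq, hr]
    have key : ∀ a b : ℝ, a ≠ 0 →
        a^2 - b^2 * (b/a)^n = Real.sqrt 5 * ((a^(n+2) - b^(n+2))/Real.sqrt 5) / a^n := by
      intro a b ha; rw [div_pow]; field_simp; ring
    exact key _ _ Real.goldenRatio_ne_zero
  have hdenpos : 0 < Real.goldenRatio^2 - Real.goldenConj^2 * r^n := by
    rw [hden]; positivity
  rw [div_eq_div_iff hdenpos.ne' hfib.ne']
  rw [Real.coe_fib_eq, Real.coe_fib_eq, hr, div_pow]
  field_simp
  ring

lemma small_tendsto :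
    Tendsto (fun n : ℕ => (Nat.fib (n+1) : ℝ) / (n * Nat.fib (n+2))) atTop (nhds 0) := by
  apply squeeze_zero' (g := fun n : ℕ => 1/(n:ℝ))
  · filter_upwards with n; positivity
  · filter_upwards [eventually_ge_atTop 1] with n hn
    have hn0 : (0:ℝ) < n := by exact_mod_cast hn
    have hf2 : (0:ℝ) < Nat.fib (n+2) := by exact_mod_cast Nat.fib_pos.2 (by omega)
    have hmono : (Nat.fib (n+1):ℝ) ≤ Nat.fib (n+2) := by
      exact_mod_cast Nat.fib_le_fib_succ
    rw [div_le_div_iff₀ (by positivity) hn0]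
    nlinarith
  · exact tendsto_one_div_atTop_nhds_zero_nat

lemma natsucc_div_tendsto : Tendsto (fun n : ℕ => ((n:ℝ)+1)/n) atTop (nhds 1) := by
  have h := tendsto_one_div_atTop_nhds_zero_nat.const_add (1:ℝ)
  rw [add_zero] at h
  refine h.congr' ?_
  filter_upwards [eventually_ge_atTop 1] with n hn
  have hn0 : (n:ℝ) ≠ 0 := by exact_mod_cast Nat.one_le_iff_ne_zero.1 hn
  field_simp

/-- The average density of `1`s in a random solus string:
`lim aₙ/(n F(n+2)) = (5-√5)/10`. -/
theorem solus_density :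
    Tendsto (fun n : ℕ => (solusBitsum n : ℝ) / (n * Nat.fib (n + 2)))
      atTop (nhds ((5 - Real.sqrt 5) / 10)) := by
  have key : Tendsto (fun n : ℕ => ((((n:ℝ)+1)/n) * ((Nat.fib n : ℝ)/(Nat.fib (n+2)) + 1)
      - (Nat.fib (n+1):ℝ)/((n:ℝ) * Nat.fib (n+2))) / 5) atTop
      (nhds ((1 * ((3 - Real.sqrt 5)/2 + 1) - 0) / 5)) :=
    ((natsucc_div_tendsto.mul (fib_div_tendsto.add tendsto_const_nhds)).sub
      small_tendsto).div_const 5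
  have hval : ((1:ℝ) * ((3 - Real.sqrt 5)/2 + 1) - 0) / 5 = (5 - Real.sqrt 5)/10 := by ring
  rw [hval] at key
  refine key.congr' ?_
  filter_upwards [eventually_ge_atTop 1] with n hn
  have hn0 : (n:ℝ) ≠ 0 := by
    exact_mod_cast Nat.one_le_iff_ne_zero.1 hn
  have hf : (Nat.fib (n+2):ℝ) ≠ 0 := by
    have := Nat.fib_pos.2 (show 0 < n+2 by omega)
    exact_mod_cast this.ne'
  have hform : 5 * (solusBitsum n : ℝ) + Nat.fib (n+1)
      = ((n:ℝ)+1) * (Nat.fib n + Nat.fib (n+2)) := by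
    exact_mod_cast solusBitsum_formula n
  field_simp
  linear_combination (-1:ℝ) * hform
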